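/- arXiv:2506.13686 — 2 statements merged into one kernel-verified Lean document; each statement's English description precedes it below -/
import Mathlib

section
/- Let P, Q be probability distributions on a finite set X, π ∈ (0,1/2], and suppose e_π(P,Q) ∈ (0,π). Then for any δ with e_π(P,Q) ≤ δ < π, setting λ* = log((1−π)/δ)/(log((1−π)/δ)+log(π/δ)), we have δ ≥ (1/4) π^{λ*} (1−π)^{1−λ*} (β_{λ*}(P,Q))². -/
open Real Finset

/-- Hellinger-λ affinity between two distributions on a finite set. -/
noncomputable def betaAff {X : Type*} [Fintype X] (l : ℝ) (P Q : X → ℝ) : ℝ :=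
  ∑ x, P x ^ l * Q x ^ (1 - l)

/-- Optimal one-shot Bayes error with prior pr. -/
noncomputable def bayesErr {X : Type*} [Fintype X] (pr : ℝ) (P Q : X → ℝ) : ℝ :=
  ∑ x, min (pr * P x) ((1 - pr) * Q x)

/-- The optimal exponent λ* of the one-shot Bayes error lower bound. -/
noncomputable def lambdaStar (pr δ : ℝ) : ℝ :=
  Real.log ((1 - pr) / δ) / (Real.log ((1 - pr) / δ) + Real.log (pr / δ))

/-!
Split `X` according to which of `π P x` and `(1 - π) Q x` is smaller. On each part, Hölder's
inequality bounds `∑ (π P)^λ ((1 - π) Q)^(1-λ)` by a product one of whose factors is a sum of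
minima, hence at most `δ`; this gives
`π^λ (1 - π)^(1-λ) β_λ(P, Q) ≤ δ^λ (1 - π)^(1-λ) + π^λ δ^(1-λ)`.
The exponent `λ*` is the one that balances the two terms, which then both equal the geometric
mean of `π^λ (1 - π)^(1-λ)` and `δ`; squaring gives the bound.
-/

namespace Finset

variable {ι : Type*} (s : Finset ι) {f g : ι → ℝ} {l : ℝ}

theorem sum_rpow_mul_rpow_le (hf : ∀ i ∈ s, 0 ≤ f i) (hg : ∀ i ∈ s, 0 ≤ g i)
    (hl0 : 0 < l) (hl1 : l < 1) :
    ∑ i ∈ s, f i ^ l * g i ^ (1 - l) ≤ (∑ i ∈ s, f i) ^ l * (∑ i ∈ s, g i) ^ (1 - l) := by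
  have holder := Real.inner_le_Lp_mul_Lq_of_nonneg s
    (Real.HolderConjugate.inv_one_sub_inv hl0 hl1) (f := fun i => f i ^ l)
    (g := fun i => g i ^ (1 - l)) (fun i hi => Real.rpow_nonneg (hf i hi) _)
    (fun i hi => Real.rpow_nonneg (hg i hi) _)
  have hl1' : 1 - l ≠ 0 := sub_ne_zero.mpr hl1.ne'
  have hF : ∑ i ∈ s, (f i ^ l) ^ l⁻¹ = ∑ i ∈ s, f i := sum_congr rfl fun i hi => by
    rw [← Real.rpow_mul (hf i hi), mul_inv_cancel₀ hl0.ne', Real.rpow_one]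
  have hG : ∑ i ∈ s, (g i ^ (1 - l)) ^ (1 - l)⁻¹ = ∑ i ∈ s, g i := sum_congr rfl fun i hi => by
    rw [← Real.rpow_mul (hg i hi), mul_inv_cancel₀ hl1', Real.rpow_one]
  simpa only [hF, hG, one_div, inv_inv] using holder

theorem sum_rpow_mul_rpow_le_of_sum_le (hf : ∀ i ∈ s, 0 ≤ f i) (hg : ∀ i ∈ s, 0 ≤ g i)
    (hl0 : 0 < l) (hl1 : l < 1) {a b : ℝ} (ha : ∑ i ∈ s, f i ≤ a) (hb : ∑ i ∈ s, g i ≤ b) :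
    ∑ i ∈ s, f i ^ l * g i ^ (1 - l) ≤ a ^ l * b ^ (1 - l) := by
  have hF := sum_nonneg hf
  have hG := sum_nonneg hg
  calc ∑ i ∈ s, f i ^ l * g i ^ (1 - l)
      ≤ (∑ i ∈ s, f i) ^ l * (∑ i ∈ s, g i) ^ (1 - l) := sum_rpow_mul_rpow_le s hf hg hl0 hl1
    _ ≤ a ^ l * b ^ (1 - l) := by
      have := hF.trans ha
      gcongr

theorem sum_rpow_mul_rpow_le_of_sum_min_le (hf : ∀ i ∈ s, 0 ≤ f i) (hg : ∀ i ∈ s, 0 ≤ g i)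
    (hl0 : 0 < l) (hl1 : l < 1) {δ : ℝ} (hδ : ∑ i ∈ s, min (f i) (g i) ≤ δ) :
    ∑ i ∈ s, f i ^ l * g i ^ (1 - l) ≤
      δ ^ l * (∑ i ∈ s, g i) ^ (1 - l) + (∑ i ∈ s, f i) ^ l * δ ^ (1 - l) := by
  classical
  set t := s.filter fun i => f i ≤ g i
  set u := s.filter fun i => ¬f i ≤ g i
  have hts : t ⊆ s := filter_subset _ s
  have hus : u ⊆ s := filter_subset _ s
  have min_sum_le {v : Finset ι} (hvs : v ⊆ s) : ∑ i ∈ v, min (f i) (g i) ≤ δ :=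
    (sum_le_sum_of_subset_of_nonneg hvs fun i hi _ => le_min (hf i hi) (hg i hi)).trans hδ
  have hft : ∑ i ∈ t, f i ≤ δ := by
    refine le_of_eq_of_le (sum_congr rfl fun i hi => ?_) (min_sum_le hts)
    exact (min_eq_left (mem_filter.mp hi).2).symm
  have hgu : ∑ i ∈ u, g i ≤ δ := by
    refine le_of_eq_of_le (sum_congr rfl fun i hi => ?_) (min_sum_le hus)
    exact (min_eq_right (not_le.mp (mem_filter.mp hi).2).le).symm
  rw [← sum_filter_add_sum_filter_not s fun i => f i ≤ g i]
  gcongr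
  · exact sum_rpow_mul_rpow_le_of_sum_le t (fun i hi => hf i (hts hi)) (fun i hi => hg i (hts hi))
      hl0 hl1 hft (sum_le_sum_of_subset_of_nonneg hts fun i hi _ => hg i hi)
  · exact sum_rpow_mul_rpow_le_of_sum_le u (fun i hi => hf i (hus hi)) (fun i hi => hg i (hus hi))
      hl0 hl1 (sum_le_sum_of_subset_of_nonneg hus fun i hi _ => hf i hi) hgu

end Finset

theorem Real.rpow_mul_rpow_eq_of_mul_log_eq {a b c l : ℝ} (ha : 0 < a) (hb : 0 < b) (hc : 0 < c)
    (h : l * log (b / c) = (1 - l) * log (a / c)) :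
    b ^ l * c ^ (1 - l) = c ^ l * a ^ (1 - l) := by
  rw [log_div hb.ne' hc.ne', log_div ha.ne' hc.ne'] at h
  simp only [rpow_def_of_pos ha, rpow_def_of_pos hb, rpow_def_of_pos hc, ← exp_add]
  congr 1
  linear_combination h

theorem lambdaStar_mem_Ioo {pr δ : ℝ} (hA : 0 < log ((1 - pr) / δ)) (hB : 0 < log (pr / δ)) :
    lambdaStar pr δ ∈ Set.Ioo 0 1 :=
  ⟨by unfold lambdaStar; positivity, (div_lt_one (by positivity)).mpr (by linarith)⟩

theorem lambdaStar_mul_log {pr δ : ℝ} (h : log ((1 - pr) / δ) + log (pr / δ) ≠ 0) :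
    lambdaStar pr δ * log (pr / δ) = (1 - lambdaStar pr δ) * log ((1 - pr) / δ) := by
  unfold lambdaStar
  field_simp
  ring

theorem betaAff_nonneg {X : Type*} [Fintype X] {P Q : X → ℝ} (hP : ∀ x, 0 ≤ P x)
    (hQ : ∀ x, 0 ≤ Q x) (l : ℝ) : 0 ≤ betaAff l P Q :=
  sum_nonneg fun x _ => mul_nonneg (rpow_nonneg (hP x) _) (rpow_nonneg (hQ x) _)

theorem mul_betaAff_le_of_bayesErr_le {X : Type*} [Fintype X] {P Q : X → ℝ}
    (hP0 : ∀ x, 0 ≤ P x) (hQ0 : ∀ x, 0 ≤ Q x) (hP1 : ∑ x, P x = 1) (hQ1 : ∑ x, Q x = 1)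
    {pr : ℝ} (hpr0 : 0 < pr) (hpr1 : pr < 1) {l : ℝ} (hl0 : 0 < l) (hl1 : l < 1) {δ : ℝ}
    (hδ : bayesErr pr P Q ≤ δ) :
    pr ^ l * (1 - pr) ^ (1 - l) * betaAff l P Q ≤
      δ ^ l * (1 - pr) ^ (1 - l) + pr ^ l * δ ^ (1 - l) := by
  have hq0 : 0 < 1 - pr := sub_pos.mpr hpr1
  have split := sum_rpow_mul_rpow_le_of_sum_min_le univ
    (fun x _ => mul_nonneg hpr0.le (hP0 x)) (fun x _ => mul_nonneg hq0.le (hQ0 x)) hl0 hl1 hδ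
  rw [← mul_sum, ← mul_sum, hP1, hQ1, mul_one, mul_one] at split
  refine le_of_eq_of_le ?_ split
  rw [betaAff, mul_sum]
  refine sum_congr rfl fun x _ => ?_
  rw [mul_rpow hpr0.le (hP0 x), mul_rpow hq0.le (hQ0 x)]
  ring

theorem one_shot_lower_bound_general {X : Type*} [Fintype X]
    (P Q : X → ℝ) (hP0 : ∀ x, 0 ≤ P x) (hQ0 : ∀ x, 0 ≤ Q x)
    (hP1 : ∑ x, P x = 1) (hQ1 : ∑ x, Q x = 1)
    (pr : ℝ) (hpr : pr ∈ Set.Ioc (0 : ℝ) (1 / 2))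
    (he : bayesErr pr P Q ∈ Set.Ioo (0 : ℝ) pr)
    (δ : ℝ) (hδ1 : bayesErr pr P Q ≤ δ) (hδ2 : δ < pr) :
    δ ≥ (1 / 4) * pr ^ lambdaStar pr δ * (1 - pr) ^ (1 - lambdaStar pr δ) *
      (betaAff (lambdaStar pr δ) P Q) ^ 2 := by
  obtain ⟨hpr0, hpr_half⟩ := hpr
  have hδ0 : 0 < δ := he.1.trans_le hδ1
  have hA : 0 < log ((1 - pr) / δ) := log_pos ((one_lt_div hδ0).mpr (by linarith))
  have hB : 0 < log (pr / δ) := log_pos ((one_lt_div hδ0).mpr hδ2)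
  set l := lambdaStar pr δ
  obtain ⟨hl0, hl1⟩ := lambdaStar_mem_Ioo hA hB
  set D := pr ^ l * (1 - pr) ^ (1 - l)
  set u := pr ^ l * δ ^ (1 - l)
  have hbalance : u = δ ^ l * (1 - pr) ^ (1 - l) :=
    rpow_mul_rpow_eq_of_mul_log_eq (by linarith) hpr0 hδ0 (lambdaStar_mul_log (by positivity))
  have hDβ : D * betaAff l P Q ≤ 2 * u := by
    have := mul_betaAff_le_of_bayesErr_le hP0 hQ0 hP1 hQ1 hpr0 (by linarith) hl0 hl1 hδ1
    linarith
  have hu_sq : u * u = D * δ := by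
    calc u * u = pr ^ l * (1 - pr) ^ (1 - l) * (δ ^ l * δ ^ (1 - l)) := by
          nth_rw 2 [hbalance]; ring
      _ = D * δ := by rw [← rpow_add hδ0, add_sub_cancel, rpow_one]
  have hD : 0 < D := mul_pos (rpow_pos_of_pos hpr0 _) (rpow_pos_of_pos (by linarith) _)
  have hβ := betaAff_nonneg hP0 hQ0 l
  have hsq : (D * betaAff l P Q) ^ 2 ≤ (2 * u) ^ 2 :=
    pow_le_pow_left₀ (mul_nonneg hD.le hβ) hDβ 2
  nlinarith
end

section
/- Reduction to Bernoulli: let π ∈ (0,1/2], λ ∈ (0,1), and c > 0. Suppose that for every (p,q) ∈ [0,1]², e_π(Ber(p),Ber(q)) ≥ c·π^λ(1−π)^{1−λ}(β_λ(p,q))². Then for every pair of probability distributions P, Q on a finite set X, e_π(P,Q) ≥ c·π^λ(1−π)^{1−λ}(β_λ(P,Q))². -/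
open Real Finset

/-- Bayes error for a pair of Bernoulli distributions Ber(p), Ber(q) with prior pr. -/
noncomputable def bayesErrB (pr p q : ℝ) : ℝ :=
  min (pr * p) ((1 - pr) * q) + min (pr * (1 - p)) ((1 - pr) * (1 - q))

/-- Hellinger-λ affinity for Bernoulli distributions. -/
noncomputable def betaB (l p q : ℝ) : ℝ :=
  p ^ l * q ^ (1 - l) + (1 - p) ^ l * (1 - q) ^ (1 - l)


/-! The Bayes-optimal test `A = {x | π P x ≤ (1 - π) Q x}` quantises `X` to a binary alphabet without
changing the Bayes error, while by Hölder's inequality quantisation can only increase the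
Hellinger affinity; so the Bernoulli bound for `(P A, Q A)` transfers to `(P, Q)`. -/

theorem Real.sum_rpow_mul_rpow_one_sub_le {ι : Type*} (s : Finset ι) {l : ℝ} (hl0 : 0 < l)
    (hl1 : l < 1) {f g : ι → ℝ} (hf : ∀ i ∈ s, 0 ≤ f i) (hg : ∀ i ∈ s, 0 ≤ g i) :
    ∑ i ∈ s, f i ^ l * g i ^ (1 - l) ≤ (∑ i ∈ s, f i) ^ l * (∑ i ∈ s, g i) ^ (1 - l) := by
  have hl1' : 1 - l ≠ 0 := sub_ne_zero.2 hl1.ne'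
  have holder := Real.inner_le_Lp_mul_Lq_of_nonneg s (Real.HolderConjugate.inv_one_sub_inv hl0 hl1)
    (fun i hi => rpow_nonneg (hf i hi) l) (fun i hi => rpow_nonneg (hg i hi) (1 - l))
  simp only [one_div, inv_inv] at holder
  rwa [sum_congr rfl fun i hi => rpow_rpow_inv (hf i hi) hl0.ne',
    sum_congr rfl fun i hi => rpow_rpow_inv (hg i hi) hl1'] at holder

section Quantisation

variable {X : Type*} [Fintype X] {P Q : X → ℝ}

theorem sum_mem_Icc_of_sum_eq_one (hP0 : ∀ x, 0 ≤ P x) (hP1 : ∑ x, P x = 1) (A : Finset X) :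
    ∑ x ∈ A, P x ∈ Set.Icc (0 : ℝ) 1 :=
  ⟨sum_nonneg fun x _ => hP0 x,
    hP1 ▸ sum_le_sum_of_subset_of_nonneg (subset_univ A) fun x _ _ => hP0 x⟩

theorem sum_compl_eq_one_sub [DecidableEq X] (hP1 : ∑ x, P x = 1) (A : Finset X) :
    ∑ x ∈ Aᶜ, P x = 1 - ∑ x ∈ A, P x :=
  eq_sub_of_add_eq ((sum_compl_add_sum A P).trans hP1)

theorem betaAff_le_betaB_sum {l : ℝ} (hl0 : 0 < l) (hl1 : l < 1) (hP0 : ∀ x, 0 ≤ P x)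
    (hQ0 : ∀ x, 0 ≤ Q x) (hP1 : ∑ x, P x = 1) (hQ1 : ∑ x, Q x = 1) (A : Finset X) :
    betaAff l P Q ≤ betaB l (∑ x ∈ A, P x) (∑ x ∈ A, Q x) := by
  classical
  rw [betaAff, betaB, ← sum_add_sum_compl A, ← sum_compl_eq_one_sub hP1,
    ← sum_compl_eq_one_sub hQ1]
  gcongr <;>
    exact Real.sum_rpow_mul_rpow_one_sub_le _ hl0 hl1 (fun x _ => hP0 x) (fun x _ => hQ0 x)

theorem bayesErrB_le_bayesErr {pr : ℝ} (hQ1 : ∑ x, Q x = 1) (A : Finset X)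
    (hA : ∀ x, x ∈ A ↔ pr * P x ≤ (1 - pr) * Q x) :
    bayesErrB pr (∑ x ∈ A, P x) (∑ x ∈ A, Q x) ≤ bayesErr pr P Q := by
  classical
  have hErr : bayesErr pr P Q = pr * ∑ x ∈ A, P x + (1 - pr) * (1 - ∑ x ∈ A, Q x) := by
    rw [bayesErr, ← sum_add_sum_compl A, ← sum_compl_eq_one_sub hQ1, mul_sum, mul_sum]
    congr 1 <;> refine sum_congr rfl fun x hx => ?_
    · exact min_eq_left ((hA x).1 hx)
    · exact min_eq_right (le_of_not_ge fun h => mem_compl.1 hx ((hA x).2 h))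
  rw [hErr, bayesErrB]
  exact add_le_add (min_le_left _ _) (min_le_right _ _)

end Quantisation

theorem reduction_to_bernoulli (pr l c : ℝ)
    (hpr : pr ∈ Set.Ioc (0 : ℝ) (1 / 2)) (hl : l ∈ Set.Ioo (0 : ℝ) 1) (hc : 0 < c)
    (hBer : ∀ p ∈ Set.Icc (0 : ℝ) 1, ∀ q ∈ Set.Icc (0 : ℝ) 1,
      bayesErrB pr p q ≥ c * pr ^ l * (1 - pr) ^ (1 - l) * (betaB l p q) ^ 2)
    {X : Type*} [Fintype X]
    (P Q : X → ℝ) (hP0 : ∀ x, 0 ≤ P x) (hQ0 : ∀ x, 0 ≤ Q x)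
    (hP1 : ∑ x, P x = 1) (hQ1 : ∑ x, Q x = 1) :
    bayesErr pr P Q ≥ c * pr ^ l * (1 - pr) ^ (1 - l) * (betaAff l P Q) ^ 2 := by
  classical
  obtain ⟨hpr0, hpr2⟩ := hpr
  set A := univ.filter fun x => pr * P x ≤ (1 - pr) * Q x
  have hconst : 0 ≤ c * pr ^ l * (1 - pr) ^ (1 - l) := by
    have : 0 < 1 - pr := by linarith
    positivity
  have hbeta : 0 ≤ betaAff l P Q :=
    sum_nonneg fun x _ => mul_nonneg (rpow_nonneg (hP0 x) l) (rpow_nonneg (hQ0 x) (1 - l))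
  calc c * pr ^ l * (1 - pr) ^ (1 - l) * betaAff l P Q ^ 2
      ≤ c * pr ^ l * (1 - pr) ^ (1 - l) * betaB l (∑ x ∈ A, P x) (∑ x ∈ A, Q x) ^ 2 := by
        gcongr
        exact betaAff_le_betaB_sum hl.1 hl.2 hP0 hQ0 hP1 hQ1 A
    _ ≤ bayesErrB pr (∑ x ∈ A, P x) (∑ x ∈ A, Q x) :=
        hBer _ (sum_mem_Icc_of_sum_eq_one hP0 hP1 A) _ (sum_mem_Icc_of_sum_eq_one hQ0 hQ1 A)
    _ ≤ bayesErr pr P Q := bayesErrB_le_bayesErr hQ1 A fun x => by simp [A]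
end
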